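/- Define φ_{n,m}(s²) = [ω^m (1 + |x|²)^(n − ρ_c)]|_{x = (s,0,…,0)} where ω is the Laplacian on ℝ^p and ρ_c = (q−1)/2. If n − ρ_c < −p/2 and m ≥ 1, then there exists a polynomial P of degree exactly m such that φ_{n,m}(s²) = P(s²)(1 + s²)^(n − 2m − ρ_c) for all s ∈ ℝ. -/

import Mathlib

/-!
For a radial function, `ω g(|x|²) = 2p g'(r) + 4r g''(r)` with `r = |x|²`. Applied to
`Q(r)(1+r)^μ` this gives `P(r)(1+r)^(μ-2)`, where the coefficient of `r^(d+1)` in `P` is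
`2(d+μ)(p+2(d+μ)-2)` times that of `r^d` in `Q` (`d ≥ deg Q`). Starting from `Q = 1` and
`μ = ν = n - ρ_c`, the `k`-th step has `μ = ν - 2k` and `d = k`, so `d + μ = ν - k < -p/2`: both
factors are negative, and the degree rises by exactly one at every step.
-/

open Real

/-- The Euclidean Laplacian on `ℝ^p`, as an operator on functions. -/
noncomputable def laplacianOp {p : ℕ} (f : (Fin p → ℝ) → ℝ) :
    (Fin p → ℝ) → ℝ :=
  fun x => ∑ i, iteratedDeriv 2 (fun t => f (Function.update x i t)) (x i)

open Polynomial

lemma sum_sq_update {ι : Type*} [Fintype ι] [DecidableEq ι] (x : ι → ℝ) (i : ι) (t : ℝ) :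
    ∑ j, Function.update x i t j ^ 2 = t ^ 2 + ∑ j ∈ Finset.univ.erase i, x j ^ 2 := by
  have hupd : (fun j => Function.update x i t j ^ 2) =
      Function.update (fun j => x j ^ 2) i (t ^ 2) :=
    funext (Function.apply_update (fun _ y => y ^ 2) x i t)
  rw [hupd, Finset.sum_update_of_mem (Finset.mem_univ i), Finset.sdiff_singleton_eq_erase]

lemma iteratedDeriv_two_comp_sq_add {g g' g'' : ℝ → ℝ}
    (hg : ∀ r, 0 ≤ r → HasDerivAt g (g' r) r) (hg' : ∀ r, 0 ≤ r → HasDerivAt g' (g'' r) r)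
    {c : ℝ} (hc : 0 ≤ c) (t : ℝ) :
    iteratedDeriv 2 (fun t => g (t ^ 2 + c)) t =
      2 * g' (t ^ 2 + c) + 4 * t ^ 2 * g'' (t ^ 2 + c) := by
  have hsq (t : ℝ) : HasDerivAt (fun t => t ^ 2 + c) (2 * t) t := by
    simpa using (hasDerivAt_pow 2 t).add_const c
  have hpos (t : ℝ) : 0 ≤ t ^ 2 + c := by positivity
  have hderiv : deriv (fun t => g (t ^ 2 + c)) = fun t => 2 * t * g' (t ^ 2 + c) :=
    funext fun t => ((hg _ (hpos t)).comp t (hsq t)).congr_deriv (mul_comm _ _) |>.deriv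
  have hderiv₂ : HasDerivAt (fun t => 2 * t * g' (t ^ 2 + c))
      (2 * g' (t ^ 2 + c) + 4 * t ^ 2 * g'' (t ^ 2 + c)) t :=
    (((hasDerivAt_id' t).const_mul 2).mul ((hg' _ (hpos t)).comp t (hsq t))).congr_deriv
      (by rw [Function.comp_apply]; ring)
  rw [iteratedDeriv_succ, iteratedDeriv_one, hderiv, hderiv₂.deriv]

lemma laplacianOp_comp_sum_sq {p : ℕ} {g g' g'' : ℝ → ℝ}
    (hg : ∀ r, 0 ≤ r → HasDerivAt g (g' r) r) (hg' : ∀ r, 0 ≤ r → HasDerivAt g' (g'' r) r)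
    (x : Fin p → ℝ) :
    laplacianOp (fun y => g (∑ i, y i ^ 2)) x =
      2 * p * g' (∑ i, x i ^ 2) + 4 * (∑ i, x i ^ 2) * g'' (∑ i, x i ^ 2) := by
  have hslice (i : Fin p) :
      iteratedDeriv 2 (fun t => g (∑ j, Function.update x i t j ^ 2)) (x i) =
        2 * g' (∑ j, x j ^ 2) + 4 * x i ^ 2 * g'' (∑ j, x j ^ 2) := by
    simp_rw [sum_sq_update]
    rw [iteratedDeriv_two_comp_sq_add hg hg' (by positivity),
      Finset.add_sum_erase _ (fun j => x j ^ 2) (Finset.mem_univ i)]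
  simp only [laplacianOp, hslice, Finset.sum_add_distrib, Finset.sum_const, Finset.card_univ,
    Fintype.card_fin, nsmul_eq_mul, ← Finset.sum_mul, ← Finset.mul_sum]
  ring

noncomputable def weightedPoly (μ : ℝ) (Q : ℝ[X]) (r : ℝ) : ℝ :=
  Q.eval r * (1 + r) ^ μ

noncomputable def weightedDeriv (μ : ℝ) (Q : ℝ[X]) : ℝ[X] :=
  derivative Q * (1 + X) + C μ * Q

lemma hasDerivAt_weightedPoly (μ : ℝ) (Q : ℝ[X]) {r : ℝ} (hr : -1 < r) :
    HasDerivAt (weightedPoly μ Q) (weightedPoly (μ - 1) (weightedDeriv μ Q) r) r := by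
  have hr' : 1 + r ≠ 0 := by linarith
  have hpow : HasDerivAt (fun x : ℝ => (1 + x) ^ μ) (μ * (1 + r) ^ (μ - 1)) r := by
    simpa using ((hasDerivAt_id r).const_add 1).rpow_const (p := μ) (Or.inl hr')
  refine ((Q.hasDerivAt r).mul hpow).congr_deriv ?_
  simp only [weightedPoly, weightedDeriv, eval_add, eval_mul, eval_C, eval_X, eval_one]
  rw [← sub_add_cancel μ 1, rpow_add_one hr', sub_add_cancel]
  ring

noncomputable def laplacianStep (p : ℕ) (μ : ℝ) (Q : ℝ[X]) : ℝ[X] :=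
  C (2 * p : ℝ) * (1 + X) * weightedDeriv μ Q +
    C 4 * X * weightedDeriv (μ - 1) (weightedDeriv μ Q)

lemma laplacianOp_weightedPoly (p : ℕ) (μ : ℝ) (Q : ℝ[X]) :
    laplacianOp (fun y : Fin p → ℝ => weightedPoly μ Q (∑ i, y i ^ 2)) =
      fun x => weightedPoly (μ - 2) (laplacianStep p μ Q) (∑ i, x i ^ 2) := by
  funext x
  rw [laplacianOp_comp_sum_sq (fun r hr => hasDerivAt_weightedPoly _ _ (by linarith))
    (fun r hr => hasDerivAt_weightedPoly _ _ (by linarith))]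
  have hr : 1 + ∑ i, x i ^ 2 ≠ 0 := by positivity
  simp only [weightedPoly, laplacianStep, eval_add, eval_mul, eval_C, eval_X, eval_one]
  rw [show μ - 1 = μ - 2 + 1 by ring, add_sub_cancel_right, rpow_add_one hr]
  ring

lemma coeff_weightedDeriv (μ : ℝ) (Q : ℝ[X]) (k : ℕ) :
    (weightedDeriv μ Q).coeff k = (k + μ) * Q.coeff k + (k + 1) * Q.coeff (k + 1) := by
  rw [weightedDeriv, mul_add, mul_one, coeff_add, coeff_add, coeff_C_mul, coeff_derivative]
  cases k with
  | zero => simp [add_comm]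
  | succ k =>
    rw [coeff_mul_X, coeff_derivative]
    push_cast
    ring

lemma natDegree_weightedDeriv_le (μ : ℝ) {Q : ℝ[X]} {d : ℕ} (h : Q.natDegree ≤ d) :
    (weightedDeriv μ Q).natDegree ≤ d := by
  rw [natDegree_le_iff_coeff_eq_zero] at h ⊢
  intro N hN
  rw [coeff_weightedDeriv, h N hN, h (N + 1) (by omega), mul_zero, mul_zero, add_zero]

lemma coeff_weightedDeriv_of_natDegree_le (μ : ℝ) {Q : ℝ[X]} {d : ℕ} (h : Q.natDegree ≤ d) :
    (weightedDeriv μ Q).coeff d = (d + μ) * Q.coeff d := by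
  rw [coeff_weightedDeriv, coeff_eq_zero_of_natDegree_lt (by omega : Q.natDegree < d + 1),
    mul_zero, add_zero]

lemma natDegree_laplacianStep_le (p : ℕ) (μ : ℝ) {Q : ℝ[X]} {d : ℕ} (h : Q.natDegree ≤ d) :
    (laplacianStep p μ Q).natDegree ≤ d + 1 := by
  have h₁ := natDegree_weightedDeriv_le μ h
  have h₂ := natDegree_weightedDeriv_le (μ - 1) h₁
  rw [natDegree_le_iff_coeff_eq_zero] at h₁ h₂ ⊢
  rintro (_ | M) hM
  · omega
  simp only [laplacianStep, mul_add, mul_one, mul_assoc, add_mul, coeff_add, coeff_C_mul,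
    coeff_X_mul, h₁ M (by omega), h₁ (M + 1) (by omega), h₂ M (by omega)]
  ring

lemma coeff_laplacianStep_succ (p : ℕ) (μ : ℝ) {Q : ℝ[X]} {d : ℕ} (h : Q.natDegree ≤ d) :
    (laplacianStep p μ Q).coeff (d + 1) = 2 * (d + μ) * (p + 2 * (d + μ) - 2) * Q.coeff d := by
  have h₁ := natDegree_weightedDeriv_le μ h
  simp only [laplacianStep, mul_add, mul_one, mul_assoc, add_mul, coeff_add, coeff_C_mul,
    coeff_X_mul, coeff_eq_zero_of_natDegree_lt (by omega : (weightedDeriv μ Q).natDegree < d + 1),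
    coeff_weightedDeriv_of_natDegree_le _ h₁, coeff_weightedDeriv_of_natDegree_le _ h]
  ring

noncomputable def radialLaplacianPoly (p : ℕ) (ν : ℝ) : ℕ → ℝ[X]
  | 0 => 1
  | k + 1 => laplacianStep p (ν - 2 * k) (radialLaplacianPoly p ν k)

lemma laplacianOp_iterate_weightedPoly (p : ℕ) (ν : ℝ) (k : ℕ) :
    laplacianOp^[k] (fun x : Fin p → ℝ => weightedPoly ν 1 (∑ i, x i ^ 2)) =
      fun x => weightedPoly (ν - 2 * k) (radialLaplacianPoly p ν k) (∑ i, x i ^ 2) := by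
  induction k with
  | zero => simp [radialLaplacianPoly]
  | succ k ih =>
    rw [Function.iterate_succ_apply', ih, laplacianOp_weightedPoly, radialLaplacianPoly]
    push_cast
    ring_nf

lemma natDegree_radialLaplacianPoly_le (p : ℕ) (ν : ℝ) (k : ℕ) :
    (radialLaplacianPoly p ν k).natDegree ≤ k := by
  induction k with
  | zero => simp [radialLaplacianPoly]
  | succ k ih => exact natDegree_laplacianStep_le p _ ih

lemma coeff_radialLaplacianPoly_self_ne_zero {p : ℕ} {ν : ℝ} (hν : ν < -(p : ℝ) / 2) (k : ℕ) :
    (radialLaplacianPoly p ν k).coeff k ≠ 0 := by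
  induction k with
  | zero => simp [radialLaplacianPoly]
  | succ k ih =>
    rw [radialLaplacianPoly, coeff_laplacianStep_succ p _ (natDegree_radialLaplacianPoly_le p ν k)]
    have hk : (0 : ℝ) ≤ k := k.cast_nonneg
    have hp : (0 : ℝ) ≤ p := p.cast_nonneg
    refine mul_ne_zero (mul_ne_zero (mul_ne_zero two_ne_zero ?_) ?_) ih <;> linarith

lemma natDegree_radialLaplacianPoly {p : ℕ} {ν : ℝ} (hν : ν < -(p : ℝ) / 2) (k : ℕ) :
    (radialLaplacianPoly p ν k).natDegree = k :=
  natDegree_eq_of_le_of_coeff_ne_zero (natDegree_radialLaplacianPoly_le p ν k)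
    (coeff_radialLaplacianPoly_self_ne_zero hν k)

theorem iterated_laplacian_form_general (p q n m : ℕ) (hp : 1 ≤ p)
    (hcond : (n : ℝ) - ((q : ℝ) - 1) / 2 < -(p : ℝ) / 2) :
    ∃ P : Polynomial ℝ, P.natDegree = m ∧ P ≠ 0 ∧
      ∀ s : ℝ,
        (laplacianOp^[m]
            (fun x : Fin p → ℝ =>
              (1 + ∑ i, x i ^ 2) ^ ((n : ℝ) - ((q : ℝ) - 1) / 2)))
          (fun i => if (i : ℕ) = 0 then s else 0)
        = P.eval (s ^ 2) *
            (1 + s ^ 2) ^ ((n : ℝ) - 2 * (m : ℝ) - ((q : ℝ) - 1) / 2) := by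
  set ν : ℝ := (n : ℝ) - ((q : ℝ) - 1) / 2
  refine ⟨radialLaplacianPoly p ν m, natDegree_radialLaplacianPoly hcond m,
    fun h => coeff_radialLaplacianPoly_self_ne_zero hcond m (by simp [h]), fun s => ?_⟩
  have hpoint : ∑ i : Fin p, (if (i : ℕ) = 0 then s else 0) ^ 2 = s ^ 2 := by
    rw [Fintype.sum_eq_single ⟨0, hp⟩ fun i hi => by simp [Fin.ext_iff] at hi; simp [hi]]
    simp
  have h := congrFun (laplacianOp_iterate_weightedPoly p ν m)
    (fun i => if (i : ℕ) = 0 then s else 0)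
  simp only [weightedPoly, eval_one, one_mul, hpoint] at h
  rw [h, sub_right_comm]

/-- with `ρ_c = (q-1)/2` and `φ_{n,m}(s²) = ω^m(1+|x|²)^(n-ρ_c)`
evaluated at `x = (s,0,…,0)`, if `n - ρ_c < -p/2` and `m ≥ 1` there is a
polynomial `P` of degree exactly `m` with
`φ_{n,m}(s²) = P(s²)(1+s²)^(n-2m-ρ_c)` for all `s ∈ ℝ`. -/
theorem iterated_laplacian_form (p q n m : ℕ) (hp : 1 ≤ p) (hq : 1 ≤ q)
    (hn : 1 ≤ n) (hm : 1 ≤ m)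
    (hcond : (n : ℝ) - ((q : ℝ) - 1) / 2 < -(p : ℝ) / 2) :
    ∃ P : Polynomial ℝ, P.natDegree = m ∧ P ≠ 0 ∧
      ∀ s : ℝ,
        (laplacianOp^[m]
            (fun x : Fin p → ℝ =>
              (1 + ∑ i, x i ^ 2) ^ ((n : ℝ) - ((q : ℝ) - 1) / 2)))
          (fun i => if (i : ℕ) = 0 then s else 0)
        = P.eval (s ^ 2) *
            (1 + s ^ 2) ^ ((n : ℝ) - 2 * (m : ℝ) - ((q : ℝ) - 1) / 2) :=
  iterated_laplacian_form_general p q n m hp hcond
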